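/- Let m ≥ 2, p > 1, ε > 0, and let A = (a_{ij}) be a symmetric m × m real matrix, f ≥ 0 a real number, f_ε = √(f² + ε). Suppose tr(A) = -((p-2) f²/f_ε²) a_{11}. Then ∑_{i,j} a_{ij}² ≥ (1 + κ) ∑_j a_{1j}², where κ = 1/(m-1) if p ≥ 2 and κ = (p-1)²/(m-1) if 1 < p < 2. -/

import Mathlib

/-!
Split off the first row and the diagonal. Since `A` is symmetric, the rows `i ≠ 1` contain the
first-row entries `a_{1i}` once more, together with the diagonal entries `a_{ii}`. The trace
condition fixes `∑_{i ≠ 1} a_{ii} = -t a_{11}` with `t = 1 + (p-2) f² / f_ε²`, which lies between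
`1` and `p - 1`, so Cauchy–Schwarz gives `∑_{i ≠ 1} a_{ii}² ≥ t² a_{11}² / (m-1) ≥ κ a_{11}²`.
-/

open Finset

theorem mul_sq_le_sum_sq_of_sum_eq {ι : Type*} {s : Finset ι} (hs : s.Nonempty) {g : ι → ℝ}
    {a c κ : ℝ} (hsum : ∑ i ∈ s, g i = c * a) (hκ : κ * #s ≤ c ^ 2) :
    κ * a ^ 2 ≤ ∑ i ∈ s, g i ^ 2 := by
  have hcard : (0 : ℝ) < #s := by exact_mod_cast hs.card_pos
  refine le_of_mul_le_mul_left ?_ hcard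
  calc (#s : ℝ) * (κ * a ^ 2) = κ * #s * a ^ 2 := by ring
    _ ≤ c ^ 2 * a ^ 2 := by gcongr
    _ = (∑ i ∈ s, g i) ^ 2 := by rw [hsum]; ring
    _ ≤ #s * ∑ i ∈ s, g i ^ 2 := sq_sum_le_card_mul_sum_sq

namespace Matrix

variable {ι : Type*} [Fintype ι] [DecidableEq ι]

theorem sq_add_sq_le_sum_sq_row (A : Matrix ι ι ℝ) (i : ι) {j k : ι} (hjk : j ≠ k) :
    A i j ^ 2 + A i k ^ 2 ≤ ∑ l, A i l ^ 2 := by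
  rw [← sum_pair (f := fun l => A i l ^ 2) hjk]
  exact sum_le_univ_sum_of_nonneg fun _ => sq_nonneg _

theorem IsSymm.sum_sq_row_diag_le_sum_sq {A : Matrix ι ι ℝ} (hA : A.IsSymm) (i₀ : ι) :
    A i₀ i₀ ^ 2 + 2 * ∑ j ∈ univ.erase i₀, A i₀ j ^ 2 + ∑ i ∈ univ.erase i₀, A i i ^ 2
      ≤ ∑ i, ∑ j, A i j ^ 2 := by
  have hrows : ∑ i ∈ univ.erase i₀, (A i₀ i ^ 2 + A i i ^ 2)
      ≤ ∑ i ∈ univ.erase i₀, ∑ j, A i j ^ 2 := by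
    refine sum_le_sum fun i hi => ?_
    rw [← hA.apply i₀ i]
    exact A.sq_add_sq_le_sum_sq_row i (ne_of_mem_erase hi).symm
  rw [sum_add_distrib] at hrows
  have hrow := add_sum_erase univ (fun j => A i₀ j ^ 2) (mem_univ i₀)
  have hall := add_sum_erase univ (fun i => ∑ j, A i j ^ 2) (mem_univ i₀)
  linarith

theorem IsSymm.one_add_mul_sum_sq_row_le_sum_sq {A : Matrix ι ι ℝ} (hA : A.IsSymm) (i₀ : ι)
    {κ : ℝ} (hκ : κ ≤ 1) (hdiag : κ * A i₀ i₀ ^ 2 ≤ ∑ i ∈ univ.erase i₀, A i i ^ 2) :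
    (1 + κ) * ∑ j, A i₀ j ^ 2 ≤ ∑ i, ∑ j, A i j ^ 2 := by
  have hoff : κ * ∑ j ∈ univ.erase i₀, A i₀ j ^ 2 ≤ ∑ j ∈ univ.erase i₀, A i₀ j ^ 2 :=
    mul_le_of_le_one_left (sum_nonneg fun _ _ => sq_nonneg _) hκ
  rw [← add_sum_erase univ (fun j => A i₀ j ^ 2) (mem_univ i₀)]
  linear_combination hA.sum_sq_row_diag_le_sum_sq i₀ + hdiag + hoff

theorem sum_erase_diag_eq_of_trace_eq {A : Matrix ι ι ℝ} (i₀ : ι) {c : ℝ}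
    (htr : A.trace = c * A i₀ i₀) : ∑ i ∈ univ.erase i₀, A i i = (c - 1) * A i₀ i₀ := by
  have hsplit := add_sum_erase univ (fun i => A i i) (mem_univ i₀)
  rw [show ∑ i, A i i = A.trace from rfl, htr] at hsplit
  linarith

end Matrix

/-- The constant `κ` of the inequality is `katoConst p / (m - 1)`. -/
noncomputable def katoConst (p : ℝ) : ℝ := if 2 ≤ p then 1 else (p - 1) ^ 2

theorem katoConst_le_sq {p s : ℝ} (hp : 1 < p) (hs₀ : 0 ≤ s) (hs₁ : s ≤ 1) :
    katoConst p ≤ (1 + (p - 2) * s) ^ 2 := by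
  unfold katoConst
  split_ifs with h
  · exact one_le_pow₀ (le_add_of_nonneg_right (mul_nonneg (by linarith) hs₀))
  · have : p - 1 ≤ 1 + (p - 2) * s := by nlinarith
    exact pow_le_pow_left₀ (by linarith) this 2

theorem katoConst_le_one {p : ℝ} (hp : 1 < p) : katoConst p ≤ 1 := by
  unfold katoConst
  split_ifs with h
  · exact le_rfl
  · nlinarith

/-- Linear-algebra core of the Kato-type inequality for the perturbed
`p`-Laplacian: if a symmetric `m × m` matrix `A` satisfies
`tr A = -((p-2) f²/(f²+ε)) a₁₁`, then `∑ aᵢⱼ² ≥ (1+κ) ∑ a₁ⱼ²` with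
`κ = 1/(m-1)` for `p ≥ 2` and `κ = (p-1)²/(m-1)` for `1 < p < 2`. -/
theorem perturbed_kato_matrix_inequality (m : ℕ) (hm : 2 ≤ m) (p ε f : ℝ)
    (hp : 1 < p) (hε : 0 < ε)
    (A : Matrix (Fin m) (Fin m) ℝ) (hA : A.IsSymm)
    (htr : A.trace = -((p - 2) * f ^ 2 / (f ^ 2 + ε)) * A ⟨0, by omega⟩ ⟨0, by omega⟩) :
    (1 + (if 2 ≤ p then 1 / ((m : ℝ) - 1) else (p - 1) ^ 2 / ((m : ℝ) - 1)))
        * ∑ j, A ⟨0, by omega⟩ j ^ 2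
      ≤ ∑ i, ∑ j, A i j ^ 2 := by
  set s := f ^ 2 / (f ^ 2 + ε)
  have hs₀ : 0 ≤ s := by positivity
  have hs₁ : s ≤ 1 := div_le_one_of_le₀ (by linarith) (by positivity)
  have hm₁ : (1 : ℝ) ≤ m - 1 := by
    have : (2 : ℝ) ≤ m := by exact_mod_cast hm
    linarith
  have hcard : (#(univ.erase (⟨0, by omega⟩ : Fin m)) : ℝ) = m - 1 := by
    rw [card_erase_of_mem (mem_univ _), card_univ, Fintype.card_fin, Nat.cast_pred (by omega)]
  rw [mul_div_assoc] at htr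
  rw [← ite_div]
  change (1 + katoConst p / _) * _ ≤ _
  refine hA.one_add_mul_sum_sq_row_le_sum_sq _ ?_ ?_
  · exact (div_le_one (by linarith)).2 ((katoConst_le_one hp).trans (by linarith))
  · refine mul_sq_le_sum_sq_of_sum_eq ⟨⟨1, by omega⟩, by simp [Fin.ext_iff]⟩
      (A.sum_erase_diag_eq_of_trace_eq _ htr) ?_
    rw [hcard, div_mul_cancel₀ _ (by linarith)]
    exact (katoConst_le_sq hp hs₀ hs₁).trans_eq (by ring)
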